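/- arXiv:1601.00292 — 2 statements merged into one kernel-verified Lean document; each statement's English description precedes it below -/
import Mathlib

section
/- Let U ⊆ ℂ^{n×n} be the space of upper triangular n×n complex matrices and let β : U × ℂ^n → ℂ^n, (A, x) ↦ Ax. Then both the rank and the border rank of the structure tensor of β equal n(n+1)/2. -/
open Filter Topology

/-- `HasTensorRankLE 𝕜 β r` means that the bilinear operation `β` admits a decomposition
into `r` rank-one terms, i.e., the structure tensor `μ_β ∈ U* ⊗ V* ⊗ W` of `β` can be
written as `∑ i, f i ⊗ g i ⊗ w i` with `r` summands; equivalently `rank (μ_β) ≤ r`. -/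
def HasTensorRankLE (𝕜 : Type*) [Field 𝕜] {U V W : Type*}
    [AddCommGroup U] [Module 𝕜 U] [AddCommGroup V] [Module 𝕜 V]
    [AddCommGroup W] [Module 𝕜 W] (β : U → V → W) (r : ℕ) : Prop :=
  ∃ (f : Fin r → (U →ₗ[𝕜] 𝕜)) (g : Fin r → (V →ₗ[𝕜] 𝕜)) (w : Fin r → W),
    ∀ u v, β u v = ∑ i, (f i u * g i v) • w i

/-- The rank of the structure tensor `μ_β` of a bilinear operation `β`. -/
noncomputable def tensorRank (𝕜 : Type*) [Field 𝕜] {U V W : Type*}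
    [AddCommGroup U] [Module 𝕜 U] [AddCommGroup V] [Module 𝕜 V]
    [AddCommGroup W] [Module 𝕜 W] (β : U → V → W) : ℕ :=
  sInf {r | HasTensorRankLE 𝕜 β r}

/-- The border rank of the structure tensor `μ_β` of a bilinear operation `β` : the least `r`
such that `μ_β` is a limit of a sequence of tensors of rank at most `r` (convergence of the
tensors in the finite-dimensional space `U* ⊗ V* ⊗ W` being equivalent to pointwise
convergence of the corresponding bilinear maps). -/
noncomputable def borderRank (𝕜 : Type*) [Field 𝕜] {U V W : Type*}
    [AddCommGroup U] [Module 𝕜 U] [AddCommGroup V] [Module 𝕜 V]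
    [AddCommGroup W] [Module 𝕜 W] [TopologicalSpace W] (β : U → V → W) : ℕ :=
  sInf {r | ∃ s : ℕ → (U → V → W), (∀ m, HasTensorRankLE 𝕜 (s m) r) ∧
    ∀ u v, Tendsto (fun m => s m u v) atTop (𝓝 (β u v))}

/-- The space of upper triangular `n × n` complex matrices. -/
noncomputable def upperTriangularSpace (n : ℕ) : Submodule ℂ (Matrix (Fin n) (Fin n) ℂ) where
  carrier := {A | ∀ i j : Fin n, j < i → A i j = 0}
  add_mem' := by
    intro A B hA hB i j h
    simp [Matrix.add_apply, hA i j h, hB i j h]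
  zero_mem' := by intro i j _; simp
  smul_mem' := by
    intro c A hA i j h
    simp [Matrix.smul_apply, hA i j h]

/-!
Upper bound: `A x = ∑_{p ≤ q} A_{pq} x_q e_p` writes the tensor as a sum of `n(n+1)/2` rank-one
terms. Lower bound: for any bilinear map with a rank-`r` decomposition, a flattening
`(a, b) ↦ φ_b(β(u_a, v_b))` factors through `𝕜^r`, so has rank at most `r`. For the product by
upper triangular matrices, the choice `u_{pq} = E_{pq}`, `v_{pq} = e_q`, `φ_{pq} = e_p^*`
gives the identity matrix of size `n(n+1)/2`. Since invertibility is an open condition, this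
persists for any sequence converging to the tensor, which bounds the border rank.
-/

section TensorRank

variable {𝕜 U V W : Type*} [Field 𝕜] [AddCommGroup U] [Module 𝕜 U] [AddCommGroup V] [Module 𝕜 V]
  [AddCommGroup W] [Module 𝕜 W] {β : U → V → W} {r : ℕ}

theorem hasTensorRankLE_card_of_eq_sum {ι : Type*} [Fintype ι] (f : ι → U →ₗ[𝕜] 𝕜)
    (g : ι → V →ₗ[𝕜] 𝕜) (w : ι → W) (h : ∀ u v, β u v = ∑ i, (f i u * g i v) • w i) :
    HasTensorRankLE 𝕜 β (Fintype.card ι) := by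
  let e := Fintype.equivFin ι
  refine ⟨fun i => f (e.symm i), fun i => g (e.symm i), fun i => w (e.symm i), fun u v => ?_⟩
  rw [h, ← e.symm.sum_comp]

theorem tensorRank_le (h : HasTensorRankLE 𝕜 β r) : tensorRank 𝕜 β ≤ r :=
  Nat.sInf_le h

theorem hasTensorRankLE_tensorRank (h : HasTensorRankLE 𝕜 β r) :
    HasTensorRankLE 𝕜 β (tensorRank 𝕜 β) :=
  Nat.sInf_mem (s := {r | HasTensorRankLE 𝕜 β r}) ⟨r, h⟩

theorem HasTensorRankLE.rank_le {ι κ : Type*} [Fintype κ] (h : HasTensorRankLE 𝕜 β r)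
    (u : ι → U) (v : κ → V) (φ : κ → W →ₗ[𝕜] 𝕜) :
    (Matrix.of fun a b => φ b (β (u a) (v b))).rank ≤ r := by
  obtain ⟨f, g, w, hβ⟩ := h
  have hfactor : (Matrix.of fun a b => φ b (β (u a) (v b))) =
      Matrix.of (fun a i => f i (u a)) * Matrix.of (fun i b => g i (v b) * φ b (w i)) := by
    ext a b
    simp [hβ, Matrix.mul_apply, mul_assoc]
  rw [hfactor]
  exact (Matrix.rank_mul_le_left _ _).trans <| (Matrix.rank_le_card_width _).trans_eq <|
    Fintype.card_fin r

variable [TopologicalSpace W]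

theorem borderRank_le (h : HasTensorRankLE 𝕜 β r) : borderRank 𝕜 β ≤ r :=
  Nat.sInf_le ⟨fun _ => β, fun _ => h, fun _ _ => tendsto_const_nhds⟩

theorem borderRank_le_tensorRank (h : HasTensorRankLE 𝕜 β r) :
    borderRank 𝕜 β ≤ tensorRank 𝕜 β :=
  borderRank_le (hasTensorRankLE_tensorRank h)

variable [TopologicalSpace 𝕜] [IsTopologicalRing 𝕜] [T1Space 𝕜]

theorem Matrix.eventually_isUnit_of_tendsto {ι α : Type*} [Fintype ι] [DecidableEq ι]
    {l : Filter α} {M : α → Matrix ι ι 𝕜} {A : Matrix ι ι 𝕜} (hM : Tendsto M l (𝓝 A))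
    (hA : IsUnit A) : ∀ᶠ m in l, IsUnit (M m) := by
  have hdet : Tendsto (fun m => (M m).det) l (𝓝 A.det) :=
    ((continuous_id.matrix_det).tendsto A).comp hM
  filter_upwards [hdet.eventually_ne ((Matrix.isUnit_iff_isUnit_det A).mp hA).ne_zero] with m hm
  exact (Matrix.isUnit_iff_isUnit_det _).mpr hm.isUnit

theorem card_le_of_tendsto_of_isUnit {ι : Type*} [Fintype ι] [DecidableEq ι]
    {s : ℕ → U → V → W} (hs : ∀ m, HasTensorRankLE 𝕜 (s m) r)
    (hlim : ∀ u v, Tendsto (fun m => s m u v) atTop (𝓝 (β u v)))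
    (u : ι → U) (v : ι → V) (φ : ι → W →ₗ[𝕜] 𝕜) (hφ : ∀ b, Continuous (φ b))
    (hunit : IsUnit (Matrix.of fun a b => φ b (β (u a) (v b)))) :
    Fintype.card ι ≤ r := by
  have hM : Tendsto (fun m => Matrix.of fun a b => φ b (s m (u a) (v b))) atTop
      (𝓝 (Matrix.of fun a b => φ b (β (u a) (v b)))) :=
    tendsto_pi_nhds.mpr fun a => tendsto_pi_nhds.mpr fun b =>
      ((hφ b).tendsto _).comp (hlim (u a) (v b))
  obtain ⟨m, hm⟩ := (Matrix.eventually_isUnit_of_tendsto hM hunit).exists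
  rw [← Matrix.rank_of_isUnit _ hm]
  exact (hs m).rank_le u v φ

theorem card_le_borderRank_of_isUnit {ι : Type*} [Fintype ι] [DecidableEq ι]
    (h : HasTensorRankLE 𝕜 β r) (u : ι → U) (v : ι → V) (φ : ι → W →ₗ[𝕜] 𝕜)
    (hφ : ∀ b, Continuous (φ b)) (hunit : IsUnit (Matrix.of fun a b => φ b (β (u a) (v b)))) :
    Fintype.card ι ≤ borderRank 𝕜 β := by
  refine le_csInf ⟨r, fun _ => β, fun _ => h, fun _ _ => tendsto_const_nhds⟩ ?_
  rintro r' ⟨s, hs, hlim⟩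
  exact card_le_of_tendsto_of_isUnit hs hlim u v φ hφ hunit

end TensorRank

theorem Fintype.card_subtype_fst_le_snd (α : Type*) [Fintype α] [LinearOrder α] :
    Fintype.card {p : α × α // p.1 ≤ p.2} = Fintype.card α * (Fintype.card α + 1) / 2 := by
  rw [← Fintype.card_congr Sym2.sortEquiv, Sym2.card, Nat.choose_two_right, Nat.add_sub_cancel,
    Nat.mul_comm]

namespace upperTriangularSpace

variable {n : ℕ}

theorem single_mem {p q : Fin n} (hpq : p ≤ q) (c : ℂ) :
    Matrix.single p q c ∈ upperTriangularSpace n := by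
  intro i j hji
  rw [Matrix.single_apply_of_ne]
  rintro ⟨rfl, rfl⟩
  exact hpq.not_gt hji

noncomputable def entry (p q : Fin n) : upperTriangularSpace n →ₗ[ℂ] ℂ :=
  (Matrix.entryLinearMap ℂ ℂ p q).comp (upperTriangularSpace n).subtype

theorem mulVec_eq_sum (A : upperTriangularSpace n) (x : Fin n → ℂ) :
    (A : Matrix (Fin n) (Fin n) ℂ).mulVec x =
      ∑ pq : {pq : Fin n × Fin n // pq.1 ≤ pq.2},
        (entry pq.1.1 pq.1.2 A * x pq.1.2) • Pi.single pq.1.1 1 := by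
  obtain ⟨M, hM⟩ := A
  have hlower : ∀ pq : Fin n × Fin n, (M pq.1 pq.2 * x pq.2) • Pi.single pq.1 (1 : ℂ) ≠ 0 →
      pq.1 ≤ pq.2 := by
    intro pq hpq
    by_contra hlt
    exact hpq (by rw [hM _ _ (not_le.mp hlt), zero_mul, zero_smul])
  calc M.mulVec x = ∑ pq : Fin n × Fin n, (M pq.1 pq.2 * x pq.2) • Pi.single pq.1 1 := by
        conv_lhs => rw [M.matrix_eq_sum_single]
        simp only [Matrix.sum_mulVec, Matrix.single_mulVec_eq, Fintype.sum_prod_type]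
    _ = ∑ pq ∈ (Finset.univ : Finset (Fin n × Fin n)) with pq.1 ≤ pq.2,
          (M pq.1 pq.2 * x pq.2) • Pi.single pq.1 1 :=
        (Finset.sum_filter_of_ne fun pq _ => hlower pq).symm
    _ = ∑ pq : {pq : Fin n × Fin n // pq.1 ≤ pq.2},
          (M pq.1.1 pq.1.2 * x pq.1.2) • Pi.single pq.1.1 1 :=
        Finset.sum_subtype _ (by simp) _

theorem hasTensorRankLE_mulVec (n : ℕ) :
    HasTensorRankLE ℂ (fun (A : upperTriangularSpace n) (x : Fin n → ℂ) =>
      (A : Matrix (Fin n) (Fin n) ℂ).mulVec x)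
      (Fintype.card {pq : Fin n × Fin n // pq.1 ≤ pq.2}) :=
  hasTensorRankLE_card_of_eq_sum _ (fun pq => LinearMap.proj pq.1.2) _ mulVec_eq_sum

theorem isUnit_flattening (n : ℕ) :
    IsUnit (Matrix.of fun a b : {pq : Fin n × Fin n // pq.1 ≤ pq.2} =>
      (Matrix.single a.1.1 a.1.2 (1 : ℂ)).mulVec (Pi.single b.1.2 1) b.1.1) := by
  convert isUnit_one
  ext a b
  simp [Matrix.one_apply, Matrix.single_apply, Subtype.ext_iff, Prod.ext_iff]

theorem card_le_borderRank_mulVec (n : ℕ) :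
    Fintype.card {pq : Fin n × Fin n // pq.1 ≤ pq.2} ≤
      borderRank ℂ (fun (A : upperTriangularSpace n) (x : Fin n → ℂ) =>
        (A : Matrix (Fin n) (Fin n) ℂ).mulVec x) :=
  card_le_borderRank_of_isUnit (hasTensorRankLE_mulVec n)
    (fun a => ⟨Matrix.single a.1.1 a.1.2 1, single_mem a.2 1⟩) (fun b => Pi.single b.1.2 1)
    (fun b => LinearMap.proj b.1.1) (fun _ => continuous_apply _) (isUnit_flattening n)

end upperTriangularSpace

/-- The structure tensor of the upper triangular matrix-vector product
`(A, x) ↦ Ax` has both rank and border rank equal to `n(n+1)/2`. -/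
theorem tensorRank_and_borderRank_upperTriangular_mulVec (n : ℕ) :
    tensorRank ℂ (fun (A : upperTriangularSpace n) (x : Fin n → ℂ) =>
        (A : Matrix (Fin n) (Fin n) ℂ).mulVec x) = n * (n + 1) / 2 ∧
    borderRank ℂ (fun (A : upperTriangularSpace n) (x : Fin n → ℂ) =>
        (A : Matrix (Fin n) (Fin n) ℂ).mulVec x) = n * (n + 1) / 2 := by
  have hcard : Fintype.card {pq : Fin n × Fin n // pq.1 ≤ pq.2} = n * (n + 1) / 2 := by
    simpa using Fintype.card_subtype_fst_le_snd (Fin n)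
  have hup := upperTriangularSpace.hasTensorRankLE_mulVec n
  have hlow := upperTriangularSpace.card_le_borderRank_mulVec n
  rw [hcard] at hup hlow
  exact ⟨le_antisymm (tensorRank_le hup) (hlow.trans (borderRank_le_tensorRank hup)),
    le_antisymm (borderRank_le hup) hlow⟩
end

section
/- Let Circ_n(ℂ) be the space of n×n complex circulant matrices, let μ_c be the structure tensor of the circulant matrix-vector product β_c : Circ_n(ℂ) × ℂ^n → ℂ^n, and let μ_C be the structure tensor of the algebra Circ_n(ℂ). Then brank(μ_c) = brank(μ_C) = n. -/
open Filter Topology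

/-- Forming the circulant matrix of a vector, as a linear map. -/
noncomputable def circulantLin (n : ℕ) : (Fin n → ℂ) →ₗ[ℂ] Matrix (Fin n) (Fin n) ℂ where
  toFun v := Matrix.circulant v
  map_add' v w := by ext i j; simp [Matrix.circulant_apply]
  map_smul' c v := by ext i j; simp [Matrix.circulant_apply]

/-- The space `Circ_n(ℂ)` of `n × n` complex circulant matrices. -/
noncomputable def circulantSpace (n : ℕ) : Submodule ℂ (Matrix (Fin n) (Fin n) ℂ) :=
  LinearMap.range (circulantLin n)

/-- Circulant matrices are closed under matrix multiplication. -/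
theorem mul_mem_circulantSpace {n : ℕ} (A B : circulantSpace n) :
    (A : Matrix (Fin n) (Fin n) ℂ) * (B : Matrix (Fin n) (Fin n) ℂ) ∈ circulantSpace n := by
  obtain ⟨v, hv⟩ := A.2
  obtain ⟨w, hw⟩ := B.2
  refine ⟨Matrix.mulVec (Matrix.circulant v) w, ?_⟩
  show Matrix.circulant (Matrix.mulVec (Matrix.circulant v) w) = _
  rw [← Matrix.Fin.circulant_mul]
  have hv' : Matrix.circulant v = (A : Matrix (Fin n) (Fin n) ℂ) := hv
  have hw' : Matrix.circulant w = (B : Matrix (Fin n) (Fin n) ℂ) := hw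
  rw [hv', hw']

/-!
The discrete Fourier transform diagonalises all circulant matrices at once: for a primitive
additive character `ψ` of `ℤ/n`, the vector `circulant v *ᵥ w` is the sum over `t` of the
product of the `t`-th Fourier coefficients of `v` and `w` times the fixed vector
`i ↦ ψ (-(t * i)) / n`, so the tensor has rank at most `n`. Conversely, feeding the identity
matrix into the first slot turns a border decomposition of rank `r` into a sequence of matrices
of rank at most `r` converging to the identity; since the determinant is continuous, `r ≥ n`.
The algebra `Circ_n(ℂ)` is the matrix-vector product transported along the linear isomorphism
`v ↦ circulant v`, because `circulant v * circulant w = circulant (circulant v *ᵥ w)`.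
-/

section BorderRank

variable {𝕜 : Type*} [Field 𝕜] {U V W U' V' W' : Type*}
  [AddCommGroup U] [Module 𝕜 U] [AddCommGroup V] [Module 𝕜 V] [AddCommGroup W] [Module 𝕜 W]
  [AddCommGroup U'] [Module 𝕜 U'] [AddCommGroup V'] [Module 𝕜 V']
  [AddCommGroup W'] [Module 𝕜 W']

variable (𝕜) in
def HasBorderRankLE [TopologicalSpace W] (β : U → V → W) (r : ℕ) : Prop :=
  ∃ s : ℕ → (U → V → W), (∀ m, HasTensorRankLE 𝕜 (s m) r) ∧
    ∀ u v, Tendsto (fun m => s m u v) atTop (𝓝 (β u v))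

theorem borderRank_eq_of_isLeast [TopologicalSpace W] {β : U → V → W} {r : ℕ}
    (h : IsLeast {r | HasBorderRankLE 𝕜 β r} r) : borderRank 𝕜 β = r :=
  h.csInf_eq

theorem hasTensorRankLE_of_eq_sum {ι : Type*} [Fintype ι] {β : U → V → W}
    (f : ι → U →ₗ[𝕜] 𝕜) (g : ι → V →ₗ[𝕜] 𝕜) (w : ι → W)
    (hβ : ∀ u v, β u v = ∑ i, (f i u * g i v) • w i) :
    HasTensorRankLE 𝕜 β (Fintype.card ι) := by
  let e := (Fintype.equivFin ι).symm
  refine ⟨f ∘ e, g ∘ e, w ∘ e, fun u v => ?_⟩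
  rw [hβ]
  exact (e.sum_comp fun i => (f i u * g i v) • w i).symm

theorem HasTensorRankLE.comp {β : U → V → W} {β' : U' → V' → W'} {r : ℕ}
    (h : HasTensorRankLE 𝕜 β r) (a : U' →ₗ[𝕜] U) (b : V' →ₗ[𝕜] V) (c : W →ₗ[𝕜] W')
    (hβ' : ∀ u v, β' u v = c (β (a u) (b v))) : HasTensorRankLE 𝕜 β' r := by
  obtain ⟨f, g, w, hfgw⟩ := h
  refine ⟨fun i => f i ∘ₗ a, fun i => g i ∘ₗ b, fun i => c (w i), fun u v => ?_⟩
  simp [hβ', hfgw, map_sum, map_smul]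

theorem HasTensorRankLE.hasBorderRankLE [TopologicalSpace W] {β : U → V → W} {r : ℕ}
    (h : HasTensorRankLE 𝕜 β r) : HasBorderRankLE 𝕜 β r :=
  ⟨fun _ => β, fun _ => h, fun _ _ => tendsto_const_nhds⟩

theorem HasBorderRankLE.comp [TopologicalSpace W] [TopologicalSpace W']
    {β : U → V → W} {β' : U' → V' → W'} {r : ℕ}
    (h : HasBorderRankLE 𝕜 β r) (a : U' →ₗ[𝕜] U) (b : V' →ₗ[𝕜] V) (c : W →L[𝕜] W')
    (hβ' : ∀ u v, β' u v = c (β (a u) (b v))) : HasBorderRankLE 𝕜 β' r := by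
  obtain ⟨s, hs, hlim⟩ := h
  refine ⟨fun m u v => c (s m (a u) (b v)), fun m => (hs m).comp a b c fun _ _ => rfl,
    fun u v => ?_⟩
  rw [hβ']
  exact (c.continuous.tendsto _).comp (hlim (a u) (b v))

theorem Matrix.det_mul_eq_zero_of_card_lt {ι κ : Type*} [Fintype ι] [DecidableEq ι]
    [Fintype κ] (A : Matrix ι κ 𝕜) (B : Matrix κ ι 𝕜)
    (h : Fintype.card κ < Fintype.card ι) : (A * B).det = 0 := by
  by_contra hdet
  have hrank := (A * B).rank_of_isUnit ((Matrix.isUnit_iff_isUnit_det _).2 (Ne.isUnit hdet))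
  have := (A.rank_mul_le_left B).trans A.rank_le_card_width
  omega

theorem card_le_of_hasBorderRankLE [TopologicalSpace 𝕜] [IsTopologicalRing 𝕜] [T2Space 𝕜]
    {ι : Type*} [Fintype ι] [DecidableEq ι] {β : U → V → ι → 𝕜} {r : ℕ} (u₀ : U) (v : ι → V)
    (hβ : ∀ j, β u₀ (v j) = Pi.single j 1) (h : HasBorderRankLE 𝕜 β r) :
    Fintype.card ι ≤ r := by
  obtain ⟨s, hs, hlim⟩ := h
  by_contra! hr
  choose f g w hfgw using hs
  let M : ℕ → Matrix ι ι 𝕜 := fun m => Matrix.of fun j => s m u₀ (v j)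
  have hM : ∀ m, M m = Matrix.of (fun j t => f m t u₀ * g m t (v j)) * Matrix.of (w m) := by
    intro m
    ext j i
    simp [M, hfgw, Matrix.mul_apply, Finset.sum_apply]
  have hsingular : ∀ m, (M m).det = 0 := fun m => by
    rw [hM]
    exact Matrix.det_mul_eq_zero_of_card_lt _ _ (by simpa using hr)
  have hM1 : Tendsto M atTop (𝓝 1) := by
    have : (1 : Matrix ι ι 𝕜) = Matrix.of fun j => Pi.single j 1 := by
      ext i j
      exact Matrix.one_eq_pi_single
    rw [this]
    refine tendsto_pi_nhds.2 fun j => ?_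
    have := hlim u₀ (v j)
    rwa [hβ] at this
  have := (isClosed_eq (continuous_id.matrix_det) continuous_const).mem_of_tendsto hM1
    (Eventually.of_forall hsingular)
  simp at this

end BorderRank

open Matrix

section Fourier

variable {R : Type*} [CommRing R] [Fintype R]

def dftCoeff (ψ : AddChar R ℂ) (t : R) : (R → ℂ) →ₗ[ℂ] ℂ :=
  ∑ k, ψ (t * k) • LinearMap.proj k

theorem dftCoeff_apply (ψ : AddChar R ℂ) (t : R) (v : R → ℂ) :
    dftCoeff ψ t v = ∑ k, ψ (t * k) * v k := by
  simp [dftCoeff]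

theorem AddChar.IsPrimitive.sum_mul_mul_neg [DecidableEq R] {ψ : AddChar R ℂ}
    (hψ : ψ.IsPrimitive) (i j k : R) :
    ∑ t, ψ (t * k) * ψ (t * j) * ψ (-(t * i)) =
      if k = i - j then (Fintype.card R : ℂ) else 0 := by
  simp_rw [← AddChar.map_add_eq_mul, ← mul_add, ← mul_neg, ← mul_add]
  rw [AddChar.sum_mulShift _ hψ]
  simp [← sub_eq_add_neg, sub_eq_zero, eq_sub_iff_add_eq]

theorem circulant_mulVec_eq_sum_dftCoeff [DecidableEq R] {ψ : AddChar R ℂ}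
    (hψ : ψ.IsPrimitive) (v w : R → ℂ) :
    circulant v *ᵥ w = ∑ t, (dftCoeff ψ t v * dftCoeff ψ t w) •
      fun i => ψ (-(t * i)) / Fintype.card R := by
  have hcard : (Fintype.card R : ℂ) ≠ 0 := Nat.cast_ne_zero.2 Fintype.card_ne_zero
  ext i
  symm
  calc _ = ∑ t, ∑ k, ∑ j,
        v k * w j * (ψ (t * k) * ψ (t * j) * ψ (-(t * i))) / Fintype.card R := by
        simp_rw [Finset.sum_apply, Pi.smul_apply, smul_eq_mul, dftCoeff_apply,
          Finset.sum_mul_sum, Finset.sum_mul]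
        refine Finset.sum_congr rfl fun t _ => Finset.sum_congr rfl fun k _ =>
          Finset.sum_congr rfl fun j _ => ?_
        ring
    _ = ∑ j, ∑ k, v k * w j * (∑ t, ψ (t * k) * ψ (t * j) * ψ (-(t * i))) / Fintype.card R := by
        rw [Finset.sum_comm_cycle]
        refine Finset.sum_congr rfl fun j _ => ?_
        rw [Finset.sum_comm]
        simp_rw [Finset.mul_sum, Finset.sum_div]
    _ = ∑ j, v (i - j) * w j := by
        simp only [hψ.sum_mul_mul_neg, mul_ite, mul_zero, ite_div, zero_div,
          mul_div_cancel_right₀ _ hcard, Finset.sum_ite_eq', Finset.mem_univ, if_true]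
    _ = (circulant v *ᵥ w) i := by
        simp [mulVec, dotProduct, circulant_apply]

end Fourier

theorem hasTensorRankLE_circulant_mulVec {R : Type*} [CommRing R] [Fintype R] [DecidableEq R]
    {ψ : AddChar R ℂ} (hψ : ψ.IsPrimitive) :
    HasTensorRankLE ℂ (fun v w : R → ℂ => circulant v *ᵥ w) (Fintype.card R) :=
  hasTensorRankLE_of_eq_sum _ _ _ (circulant_mulVec_eq_sum_dftCoeff hψ)

theorem card_le_of_hasBorderRankLE_circulant_mulVec {𝕜 : Type*} [Field 𝕜] [TopologicalSpace 𝕜]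
    [IsTopologicalRing 𝕜] [T2Space 𝕜] {R : Type*} [AddGroup R] [Fintype R] [DecidableEq R]
    {r : ℕ} (h : HasBorderRankLE 𝕜 (fun v w : R → 𝕜 => circulant v *ᵥ w) r) :
    Fintype.card R ≤ r :=
  card_le_of_hasBorderRankLE (Pi.single 0 1) (fun j => Pi.single j 1)
    (fun j => by rw [circulant_single_one, one_mulVec]) h

theorem isLeast_hasBorderRankLE_fin_circulant_mulVec (n : ℕ) :
    IsLeast {r | HasBorderRankLE ℂ (fun v w : Fin n → ℂ => circulant v *ᵥ w) r} n := by
  obtain _ | n := n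
  · exact ⟨HasTensorRankLE.hasBorderRankLE ⟨finZeroElim, finZeroElim, finZeroElim,
      fun _ _ => Subsingleton.elim _ _⟩, fun r _ => r.zero_le⟩
  · refine ⟨?_, fun r h => by simpa using card_le_of_hasBorderRankLE_circulant_mulVec h⟩
    have := (hasTensorRankLE_circulant_mulVec (ZMod.isPrimitive_stdAddChar (n + 1))).hasBorderRankLE
    rw [ZMod.card] at this
    -- `ZMod (n + 1)` is `Fin (n + 1)` by definition
    exact this

noncomputable def circulantEquiv (n : ℕ) : (Fin n → ℂ) ≃ₗ[ℂ] circulantSpace n :=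
  LinearEquiv.ofInjective (circulantLin n) (Fin.circulant_injective n)

@[simp]
theorem coe_circulantEquiv (n : ℕ) (v : Fin n → ℂ) :
    (circulantEquiv n v : Matrix (Fin n) (Fin n) ℂ) = circulant v :=
  rfl

@[simp]
theorem circulant_circulantEquiv_symm (n : ℕ) (A : circulantSpace n) :
    circulant ((circulantEquiv n).symm A) = A := by
  rw [← coe_circulantEquiv, LinearEquiv.apply_symm_apply]

theorem hasBorderRankLE_circulantSpace_mulVec_iff (n r : ℕ) :
    HasBorderRankLE ℂ (fun (A : circulantSpace n) (y : Fin n → ℂ) =>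
      (A : Matrix (Fin n) (Fin n) ℂ) *ᵥ y) r ↔
    HasBorderRankLE ℂ (fun v w : Fin n → ℂ => circulant v *ᵥ w) r :=
  ⟨fun h => h.comp (circulantEquiv n).toLinearMap LinearMap.id (ContinuousLinearMap.id ℂ _)
      fun _ _ => by simp,
    fun h => h.comp (circulantEquiv n).symm.toLinearMap LinearMap.id (ContinuousLinearMap.id ℂ _)
      fun _ _ => by simp⟩

theorem hasBorderRankLE_circulantSpace_mul_iff (n r : ℕ) :
    HasBorderRankLE ℂ (fun (A B : circulantSpace n) =>
      (⟨(A : Matrix (Fin n) (Fin n) ℂ) * (B : Matrix (Fin n) (Fin n) ℂ),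
        mul_mem_circulantSpace A B⟩ : circulantSpace n)) r ↔
    HasBorderRankLE ℂ (fun v w : Fin n → ℂ => circulant v *ᵥ w) r := by
  let e := (circulantEquiv n).toContinuousLinearEquiv
  refine ⟨fun h => h.comp e.toLinearMap e.toLinearMap e.symm.toContinuousLinearMap
      fun v w => ?_,
    fun h => h.comp e.symm.toLinearMap e.symm.toLinearMap e.toContinuousLinearMap
      fun A B => ?_⟩
  · apply e.injective
    ext : 1
    simp [e, Fin.circulant_mul]
  · obtain ⟨v, rfl⟩ := e.surjective A
    obtain ⟨w, rfl⟩ := e.surjective B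
    ext : 1
    simp [e, Fin.circulant_mul]

/-- The structure tensor `μ_c` of the circulant matrix-vector product
`Circ_n(ℂ) × ℂ^n → ℂ^n` and the structure tensor `μ_C` of the algebra `Circ_n(ℂ)` both have
border rank `n`. -/
theorem borderRank_circulant (n : ℕ) :
    borderRank ℂ (fun (A : circulantSpace n) (y : Fin n → ℂ) =>
        (A : Matrix (Fin n) (Fin n) ℂ).mulVec y) = n ∧
    borderRank ℂ (fun (A B : circulantSpace n) =>
        (⟨(A : Matrix (Fin n) (Fin n) ℂ) * (B : Matrix (Fin n) (Fin n) ℂ),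
          mul_mem_circulantSpace A B⟩ : circulantSpace n)) = n := by
  have h := isLeast_hasBorderRankLE_fin_circulant_mulVec n
  constructor
  · refine borderRank_eq_of_isLeast ?_
    simpa only [hasBorderRankLE_circulantSpace_mulVec_iff] using h
  · refine borderRank_eq_of_isLeast ?_
    simpa only [hasBorderRankLE_circulantSpace_mul_iff] using h
end
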